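/- arXiv:2212.00228 — 4 statements merged into one kernel-verified Lean document; each statement's English description precedes it below -/
import Mathlib

section
/- Let A, B, C be matrices with A and B commuting, and let h_n satisfy h_n = 0 for n ≤ 0 and h_{n+1} = A h_n + B h_{n-m} + C u_n for n ≥ 0, with delay m > 0. Then for j = 1, ..., m+1, h_{m+1+j} = Σ_{i=0}^{j-1} (A^{m+j-i} + (j-i) A^{j-i-1} B) C u_i + Σ_{i=j}^{m+j} A^{m+j-i} C u_i. -/
private lemma mulVec_sum' {d : ℕ} (A : Matrix (Fin d) (Fin d) ℝ) (s : Finset ℕ) (f : ℕ → Fin d → ℝ) :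
    A.mulVec (∑ i ∈ s, f i) = ∑ i ∈ s, A.mulVec (f i) := by
  ext x
  simp [Matrix.mulVec, dotProduct, Finset.mul_sum]
  exact Finset.sum_comm

private lemma nsmul_mulVec {d p : ℕ} (n : ℕ) (M : Matrix (Fin d) (Fin p) ℝ) (v : Fin p → ℝ) :
    (n • M).mulVec v = n • M.mulVec v := by
  ext x
  simp [Matrix.mulVec, dotProduct, Finset.mul_sum, mul_assoc]

/-- Linear time-delayed recurrence with commuting `A`, `B`: for `j = 1, ..., m+1`,
`h (m+1+j) = ∑_{i=0}^{j-1} (A^(m+j-i) + (j-i) A^(j-i-1) B) C u_i + ∑_{i=j}^{m+j} A^(m+j-i) C u_i`. -/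
theorem stmt_1 {d p : ℕ} (A B : Matrix (Fin d) (Fin d) ℝ) (C : Matrix (Fin d) (Fin p) ℝ)
    (hAB : A * B = B * A)
    (u : ℕ → Fin p → ℝ) (m : ℕ) (hm : 0 < m)
    (h : ℤ → Fin d → ℝ)
    (h0 : ∀ n : ℤ, n ≤ 0 → h n = 0)
    (hrec : ∀ n : ℕ, h ((n : ℤ) + 1) =
      A.mulVec (h n) + B.mulVec (h ((n : ℤ) - m)) + C.mulVec (u n)) :
    ∀ j : ℕ, 1 ≤ j → j ≤ m + 1 →
      h ((m : ℤ) + 1 + j) =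
        (∑ i ∈ Finset.range j,
          (A ^ (m + j - i) + (j - i) • (A ^ (j - i - 1) * B)).mulVec (C.mulVec (u i)))
        + ∑ i ∈ Finset.Icc j (m + j), (A ^ (m + j - i)).mulVec (C.mulVec (u i)) := by
  have hAB' : Commute A B := hAB
  -- base lemma: for n ≤ m+1, the delayed term has not kicked in
  have hb : ∀ n : ℕ, n ≤ m + 1 →
      h n = ∑ i ∈ Finset.range n, (A ^ (n - 1 - i)).mulVec (C.mulVec (u i)) := by
    intro n
    induction n with
    | zero => intro _; simpa using h0 0 le_rfl
    | succ n ih =>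
      intro hn
      have hz : h ((n : ℤ) - m) = 0 := h0 _ (by omega)
      have hr := hrec n
      rw [hz, Matrix.mulVec_zero, add_zero, ih (by omega)] at hr
      have hc : ((n + 1 : ℕ) : ℤ) = (n : ℤ) + 1 := by push_cast; ring
      rw [hc, hr, mulVec_sum', Finset.sum_range_succ]
      congr 1
      · apply Finset.sum_congr rfl
        intro i hi
        simp only [Finset.mem_range] at hi
        rw [Matrix.mulVec_mulVec, ← pow_succ',
          show n - 1 - i + 1 = n + 1 - 1 - i from by omega]
      · rw [show n + 1 - 1 - n = 0 from by omega, pow_zero, Matrix.one_mulVec]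
  -- main claim, including j = 0
  have key : ∀ j : ℕ, j ≤ m + 1 →
      h ((m : ℤ) + 1 + j) =
        (∑ i ∈ Finset.range j,
          (A ^ (m + j - i) + (j - i) • (A ^ (j - i - 1) * B)).mulVec (C.mulVec (u i)))
        + ∑ i ∈ Finset.Icc j (m + j), (A ^ (m + j - i)).mulVec (C.mulVec (u i)) := by
    intro j
    induction j with
    | zero =>
      intro _
      have hc : ((m : ℤ) + 1 + ((0 : ℕ) : ℤ)) = ((m + 1 : ℕ) : ℤ) := by push_cast; ring
      rw [hc, hb (m + 1) le_rfl, Finset.range_zero, Finset.sum_empty, zero_add,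
        show Finset.Icc 0 (m + 0) = Finset.range (m + 1) from by ext x; simp]
      apply Finset.sum_congr rfl
      intro i hi
      simp only [Finset.mem_range] at hi
      rw [show m + 1 - 1 - i = m + 0 - i from by omega]
    | succ j ih =>
      intro hj
      have IH := ih (by omega)
      have hbj : h ((j + 1 : ℕ)) =
          ∑ i ∈ Finset.range (j + 1), (A ^ (j - i)).mulVec (C.mulVec (u i)) := by
        rw [hb (j + 1) (by omega)]
        apply Finset.sum_congr rfl
        intro i hi
        simp only [Finset.mem_range] at hi
        rw [show j + 1 - 1 - i = j - i from by omega]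
      have hr := hrec (m + 1 + j)
      have hc2 : ((m + 1 + j : ℕ) : ℤ) - (m : ℤ) = ((j + 1 : ℕ) : ℤ) := by push_cast; ring
      have hc1 : ((m + 1 + j : ℕ) : ℤ) = (m : ℤ) + 1 + (j : ℤ) := by push_cast; ring
      rw [hc2, hbj] at hr
      rw [hc1, IH] at hr
      rw [show ((m : ℤ) + 1 + ((j + 1 : ℕ) : ℤ)) = (m : ℤ) + 1 + (j : ℤ) + 1 from by
        push_cast; ring, hr]
      -- expand the matrix applications
      rw [Matrix.mulVec_add, mulVec_sum', mulVec_sum', mulVec_sum']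
      have e1 : ∀ i ∈ Finset.range j,
          A.mulVec ((A ^ (m + j - i) + (j - i) • (A ^ (j - i - 1) * B)).mulVec (C.mulVec (u i))) =
          (A ^ (m + 1 + j - i)).mulVec (C.mulVec (u i))
            + (j - i) • (A ^ (j - i) * B).mulVec (C.mulVec (u i)) := by
        intro i hi
        simp only [Finset.mem_range] at hi
        rw [Matrix.mulVec_mulVec, mul_add, Matrix.add_mulVec, mul_smul_comm, nsmul_mulVec,
          ← mul_assoc, ← pow_succ', ← pow_succ',
          show m + j - i + 1 = m + 1 + j - i from by omega,
          show j - i - 1 + 1 = j - i from by omega]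
      have e2 : ∀ i ∈ Finset.Icc j (m + j),
          A.mulVec ((A ^ (m + j - i)).mulVec (C.mulVec (u i))) =
          (A ^ (m + 1 + j - i)).mulVec (C.mulVec (u i)) := by
        intro i hi
        simp only [Finset.mem_Icc] at hi
        rw [Matrix.mulVec_mulVec, ← pow_succ',
          show m + j - i + 1 = m + 1 + j - i from by omega]
      have e3 : ∀ i ∈ Finset.range (j + 1),
          B.mulVec ((A ^ (j - i)).mulVec (C.mulVec (u i))) =
          (A ^ (j - i) * B).mulVec (C.mulVec (u i)) := by
        intro i hi
        rw [Matrix.mulVec_mulVec, (hAB'.symm.pow_right _).eq]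
      rw [Finset.sum_congr rfl e1, Finset.sum_congr rfl e2, Finset.sum_congr rfl e3]
      -- expand the RHS summands
      have eR : ∀ i ∈ Finset.range (j + 1),
          (A ^ (m + (j + 1) - i) + (j + 1 - i) • (A ^ (j + 1 - i - 1) * B)).mulVec
              (C.mulVec (u i)) =
          (A ^ (m + 1 + j - i)).mulVec (C.mulVec (u i))
            + (j + 1 - i) • (A ^ (j - i) * B).mulVec (C.mulVec (u i)) := by
        intro i hi
        simp only [Finset.mem_range] at hi
        rw [Matrix.add_mulVec, nsmul_mulVec, show m + (j + 1) - i = m + 1 + j - i from by omega,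
          show j + 1 - i - 1 = j - i from by omega]
      rw [Finset.sum_congr rfl eR]
      -- split sums
      rw [show Finset.Icc j (m + j) = insert j (Finset.Icc (j + 1) (m + j)) from by
          ext x; simp; omega,
        Finset.sum_insert (by simp),
        Finset.sum_range_succ, Finset.sum_range_succ,
        show Finset.Icc (j + 1) (m + (j + 1)) = insert (m + j + 1) (Finset.Icc (j + 1) (m + j))
          from by ext x; simp; omega,
        Finset.sum_insert (by simp)]
      have efin : ∀ i ∈ Finset.range j,
          ((A ^ (m + 1 + j - i)).mulVec (C.mulVec (u i))
            + (j + 1 - i) • (A ^ (j - i) * B).mulVec (C.mulVec (u i))) =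
          ((A ^ (m + 1 + j - i)).mulVec (C.mulVec (u i))
            + (j - i) • (A ^ (j - i) * B).mulVec (C.mulVec (u i)))
            + (A ^ (j - i) * B).mulVec (C.mulVec (u i)) := by
        intro i hi
        simp only [Finset.mem_range] at hi
        rw [show j + 1 - i = (j - i) + 1 from by omega, succ_nsmul]
        abel
      rw [Finset.sum_congr rfl efin, Finset.sum_add_distrib, Finset.sum_add_distrib]
      -- normalize the leftover exponents and indices
      have h2 : ∀ i ∈ Finset.Icc (j + 1) (m + j),
          (A ^ (m + (j + 1) - i)).mulVec (C.mulVec (u i)) =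
          (A ^ (m + 1 + j - i)).mulVec (C.mulVec (u i)) := by
        intro i hi
        rw [show m + (j + 1) - i = m + 1 + j - i from by omega]
      rw [Finset.sum_congr rfl h2,
        show m + (j + 1) - (m + j + 1) = 0 from by omega, pow_zero, Matrix.one_mulVec,
        show (j + 1 - j) = 1 from by omega, one_nsmul,
        show m + 1 + j = m + j + 1 from by omega]
      rw [Finset.sum_add_distrib]
      abel
  intro j _ hj2
  exact key j hj2
end

section
/- Under the hypotheses of the linear delayed recurrence with commuting A and B, for j = 1, ..., m+1 and i = 0, ..., m+j, ∂h_{m+1+j}/∂u_i = A^{m+j-i} C + (j-i) · [0 ≤ i ≤ j-1] · A^{j-i-1} B C, i.e., the gradient with respect to u_i gains an extra term (j-i) A^{j-i-1} B C whenever i ≤ j-1. -/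
lemma aux {d p : ℕ} (N : ℕ → Matrix (Fin d) (Fin p) ℝ) (s : Finset ℕ) (i : ℕ)
    (u : ℕ → Fin p → ℝ) (x : Fin p → ℝ) :
    ∑ k ∈ s, (N k).mulVec (Function.update u i x k)
      = (if i ∈ s then (N i).mulVec x else 0)
        + ∑ k ∈ s, (if k = i then 0 else (N k).mulVec (u k)) := by
  have h : ∀ k ∈ s, (N k).mulVec (Function.update u i x k)
      = (if k = i then (N i).mulVec x else 0) + (if k = i then 0 else (N k).mulVec (u k)) := by
    intro k _
    rcases eq_or_ne k i with rfl | hk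
    · simp [Function.update_self]
    · simp [hk, Function.update_of_ne hk]
  rw [Finset.sum_congr rfl h, Finset.sum_add_distrib, Finset.sum_ite_eq' s i]


section
variable {d p : ℕ} (A B : Matrix (Fin d) (Fin d) ℝ) (C : Matrix (Fin d) (Fin p) ℝ)
    (m : ℕ)
    (H : (ℕ → Fin p → ℝ) → ℤ → Fin d → ℝ)

lemma fact1 (hm : 0 < m)
    (h0 : ∀ u : ℕ → Fin p → ℝ, ∀ n : ℤ, -(m : ℤ) ≤ n → n ≤ 0 → H u n = 0)
    (hrec : ∀ u : ℕ → Fin p → ℝ, ∀ n : ℕ, H u ((n : ℤ) + 1) =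
      A.mulVec (H u n) + B.mulVec (H u ((n : ℤ) - m)) + C.mulVec (u n))
    (u : ℕ → Fin p → ℝ) :
    ∀ n : ℕ, n ≤ m + 1 →
      H u (n : ℤ) = ∑ k ∈ Finset.range n, (A ^ (n - 1 - k) * C).mulVec (u k) := by
  intro n
  induction n with
  | zero => intro _; simpa using h0 u 0 (by omega) le_rfl
  | succ n ih =>
    intro hn
    have hB : H u ((n : ℤ) - m) = 0 := h0 u _ (by omega) (by omega)
    rw [show ((n + 1 : ℕ) : ℤ) = (n : ℤ) + 1 by push_cast; ring, hrec, hB, Matrix.mulVec_zero, add_zero, ih (by omega)]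
    rw [Finset.sum_range_succ]
    congr 1
    · rw [← Matrix.mulVecLin_apply, map_sum]
      refine Finset.sum_congr rfl fun k hk => ?_
      simp only [Finset.mem_range] at hk
      rw [Matrix.mulVecLin_apply, Matrix.mulVec_mulVec,
        show n + 1 - 1 - k = (n - 1 - k) + 1 by omega, pow_succ', Matrix.mul_assoc A (A ^ (n - 1 - k)) C]
    · have : n + 1 - 1 - n = 0 := by omega
      simp [this]
end

section
variable {d p : ℕ} {A B : Matrix (Fin d) (Fin d) ℝ} {C : Matrix (Fin d) (Fin p) ℝ}
    {m : ℕ} {H : (ℕ → Fin p → ℝ) → ℤ → Fin d → ℝ}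

lemma fact2 (hAB : A * B = B * A) (hm : 0 < m)
    (h0 : ∀ u : ℕ → Fin p → ℝ, ∀ n : ℤ, -(m : ℤ) ≤ n → n ≤ 0 → H u n = 0)
    (hrec : ∀ u : ℕ → Fin p → ℝ, ∀ n : ℕ, H u ((n : ℤ) + 1) =
      A.mulVec (H u n) + B.mulVec (H u ((n : ℤ) - m)) + C.mulVec (u n))
    (u : ℕ → Fin p → ℝ) :
    ∀ j : ℕ, 1 ≤ j → j ≤ m + 1 →
      H u ((m : ℤ) + 1 + j) = ∑ k ∈ Finset.range (m + j + 1), (A ^ (m + j - k) * C).mulVec (u k)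
        + ∑ k ∈ Finset.range j, ((j - k) • (A ^ (j - k - 1) * B * C)).mulVec (u k) := by
  intro j hj1
  induction j, hj1 using Nat.le_induction with
  | base =>
    intro _
    rw [show ((m : ℤ) + 1 + ((1 : ℕ) : ℤ)) = ((m + 1 : ℕ) : ℤ) + 1 by push_cast; ring, hrec,
      show (((m + 1 : ℕ)) : ℤ) - m = ((1 : ℕ) : ℤ) by push_cast; ring,
      fact1 A B C m H hm h0 hrec u 1 (by omega),
      fact1 A B C m H hm h0 hrec u (m + 1) le_rfl]
    rw [Finset.sum_range_one, Finset.sum_range_one]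
    rw [Finset.sum_range_succ (n := m + 1)]
    simp only [Nat.sub_self, pow_zero, Matrix.one_mul, Nat.sub_zero]
    rw [← Matrix.mulVecLin_apply A, map_sum]
    have hsum : ∑ k ∈ Finset.range (m + 1), A.mulVecLin ((A ^ (m + 1 - 1 - k) * C).mulVec (u k))
        = ∑ k ∈ Finset.range (m + 1), (A ^ (m + 1 - k) * C).mulVec (u k) := by
      refine Finset.sum_congr rfl fun k hk => ?_
      simp only [Finset.mem_range] at hk
      rw [Matrix.mulVecLin_apply, Matrix.mulVec_mulVec,
        show m + 1 - k = (m + 1 - 1 - k) + 1 by omega, pow_succ',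
        Matrix.mul_assoc A (A ^ (m + 1 - 1 - k)) C]
    rw [hsum]
    have h1 : ((1 : ℕ) • (B * C)).mulVec (u 0) = B.mulVec (C.mulVec (u 0)) := by
      simp [Matrix.mulVec_mulVec]
    rw [h1]
    abel
  | succ j hj1 ih =>
    intro hj
    have ihj := ih (by omega)
    rw [show ((m : ℤ) + 1 + ((j + 1 : ℕ) : ℤ)) = ((m + 1 + j : ℕ) : ℤ) + 1 by push_cast; ring,
      hrec, show (((m + 1 + j : ℕ)) : ℤ) - m = ((j + 1 : ℕ) : ℤ) by push_cast; ring,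
      fact1 A B C m H hm h0 hrec u (j + 1) (by omega),
      show ((m + 1 + j : ℕ) : ℤ) = (m : ℤ) + 1 + (j : ℕ) by push_cast; ring, ihj]
    rw [Matrix.mulVec_add, ← Matrix.mulVecLin_apply A, ← Matrix.mulVecLin_apply A, map_sum,
      map_sum, ← Matrix.mulVecLin_apply B, map_sum]
    have hA1 : ∑ k ∈ Finset.range (m + j + 1), A.mulVecLin ((A ^ (m + j - k) * C).mulVec (u k))
        = ∑ k ∈ Finset.range (m + j + 1), (A ^ (m + (j + 1) - k) * C).mulVec (u k) := by
      refine Finset.sum_congr rfl fun k hk => ?_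
      simp only [Finset.mem_range] at hk
      rw [Matrix.mulVecLin_apply, Matrix.mulVec_mulVec,
        show m + (j + 1) - k = (m + j - k) + 1 by omega, pow_succ',
        Matrix.mul_assoc A (A ^ (m + j - k)) C]
    have hA2 : ∑ k ∈ Finset.range j, A.mulVecLin (((j - k) • (A ^ (j - k - 1) * B * C)).mulVec (u k))
        = ∑ k ∈ Finset.range j, ((j - k) • (A ^ (j - k) * B * C)).mulVec (u k) := by
      refine Finset.sum_congr rfl fun k hk => ?_
      simp only [Finset.mem_range] at hk
      rw [Matrix.smul_mulVec, Matrix.smul_mulVec, map_nsmul]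
      congr 1
      obtain ⟨e, he⟩ : ∃ e, j - k = e + 1 := ⟨j - k - 1, by omega⟩
      rw [Matrix.mulVecLin_apply, Matrix.mulVec_mulVec, he, Nat.add_sub_cancel, pow_succ',
        Matrix.mul_assoc (A ^ e) B C,
        Matrix.mul_assoc (A * A ^ e) B C,
        Matrix.mul_assoc A (A ^ e) (B * C)]
    have hB1 : ∑ k ∈ Finset.range (j + 1), B.mulVecLin ((A ^ (j + 1 - 1 - k) * C).mulVec (u k))
        = ∑ k ∈ Finset.range (j + 1), ((A ^ (j - k) * B * C)).mulVec (u k) := by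
      refine Finset.sum_congr rfl fun k hk => ?_
      simp only [Finset.mem_range] at hk
      rw [Matrix.mulVecLin_apply, Matrix.mulVec_mulVec, show j + 1 - 1 - k = j - k by omega,
        ← Matrix.mul_assoc B (A ^ (j - k)) C,
        ((show Commute A B from hAB).symm.pow_right (j - k)).eq]
    have hsplit : ∑ k ∈ Finset.range (j + 1), ((A ^ (j - k) * B * C)).mulVec (u k)
        = (∑ k ∈ Finset.range j, ((A ^ (j - k) * B * C)).mulVec (u k))
          + (B * C).mulVec (u j) := by
      rw [Finset.sum_range_succ, Nat.sub_self, pow_zero, Matrix.one_mul]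
    have hextra : ∑ k ∈ Finset.range j, ((j + 1 - k) • (A ^ (j + 1 - k - 1) * B * C)).mulVec (u k)
        = ∑ k ∈ Finset.range j, ((j - k) • (A ^ (j - k) * B * C)).mulVec (u k)
        + ∑ k ∈ Finset.range j, ((A ^ (j - k) * B * C)).mulVec (u k) := by
      rw [← Finset.sum_add_distrib]
      refine Finset.sum_congr rfl fun k hk => ?_
      simp only [Finset.mem_range] at hk
      rw [show j + 1 - k - 1 = j - k by omega, show j + 1 - k = (j - k) + 1 by omega,
        succ_nsmul, Matrix.add_mulVec, Matrix.smul_mulVec]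
    have hlast : ∑ k ∈ Finset.range (j + 1), ((j + 1 - k) • (A ^ (j + 1 - k - 1) * B * C)).mulVec (u k)
        = ∑ k ∈ Finset.range j, ((j + 1 - k) • (A ^ (j + 1 - k - 1) * B * C)).mulVec (u k)
          + (B * C).mulVec (u j) := by
      rw [Finset.sum_range_succ, show j + 1 - j - 1 = 0 by omega,
        show j + 1 - j = 1 by omega, pow_zero, Matrix.one_mul, one_smul]
    have hS : ∑ k ∈ Finset.range (m + (j + 1) + 1), (A ^ (m + (j + 1) - k) * C).mulVec (u k)
        = ∑ k ∈ Finset.range (m + j + 1), (A ^ (m + (j + 1) - k) * C).mulVec (u k)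
          + C.mulVec (u (m + 1 + j)) := by
      rw [show m + (j + 1) + 1 = (m + j + 1) + 1 by omega, Finset.sum_range_succ]
      congr 1
      · rw [show m + (j + 1) - (m + j + 1) = 0 by omega, pow_zero, Matrix.one_mul,
          show m + j + 1 = m + 1 + j by omega]
    rw [hA1, hA2, hB1, hsplit, hlast, hextra, hS]
    abel
end


/-- Jacobian of the hidden state of the linear time-delayed recurrence (commuting `A`, `B`)
with respect to past inputs: for `j = 1, ..., m+1` and `0 ≤ i ≤ m+j`,
`∂h_(m+1+j)/∂u_i = A^(m+j-i) C + (j-i)·[i ≤ j-1]·A^(j-i-1) B C`. -/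
theorem stmt_3 {d p : ℕ} (A B : Matrix (Fin d) (Fin d) ℝ) (C : Matrix (Fin d) (Fin p) ℝ)
    (hAB : A * B = B * A)
    (m : ℕ) (hm : 0 < m)
    (H : (ℕ → Fin p → ℝ) → ℤ → Fin d → ℝ)
    (h0 : ∀ u : ℕ → Fin p → ℝ, ∀ n : ℤ, -(m : ℤ) ≤ n → n ≤ 0 → H u n = 0)
    (hrec : ∀ u : ℕ → Fin p → ℝ, ∀ n : ℕ, H u ((n : ℤ) + 1) =
      A.mulVec (H u n) + B.mulVec (H u ((n : ℤ) - m)) + C.mulVec (u n)) :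
    ∀ u : ℕ → Fin p → ℝ, ∀ j : ℕ, 1 ≤ j → j ≤ m + 1 → ∀ i : ℕ, i ≤ m + j →
      fderiv ℝ (fun x : Fin p → ℝ => H (Function.update u i x) ((m : ℤ) + 1 + j)) (u i)
        = LinearMap.toContinuousLinearMap (Matrix.mulVecLin
            (A ^ (m + j - i) * C +
              (if i ≤ j - 1 then (j - i) • (A ^ (j - i - 1) * B * C) else 0))) := by
  intro u j hj1 hj i hi
  set M : Matrix (Fin d) (Fin p) ℝ :=
    A ^ (m + j - i) * C +
      (if i ≤ j - 1 then (j - i) • (A ^ (j - i - 1) * B * C) else 0) with hM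
  set c : Fin d → ℝ :=
    (∑ k ∈ Finset.range (m + j + 1), if k = i then 0 else (A ^ (m + j - k) * C).mulVec (u k))
      + ∑ k ∈ Finset.range j,
          (if k = i then 0 else ((j - k) • (A ^ (j - k - 1) * B * C)).mulVec (u k)) with hc
  have key : ∀ x : Fin p → ℝ,
      H (Function.update u i x) ((m : ℤ) + 1 + j) = M.mulVec x + c := by
    intro x
    rw [fact2 hAB hm h0 hrec (Function.update u i x) j hj1 hj,
      aux (fun k => A ^ (m + j - k) * C) (Finset.range (m + j + 1)) i u x,
      aux (fun k => (j - k) • (A ^ (j - k - 1) * B * C)) (Finset.range j) i u x,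
      if_pos (Finset.mem_range.mpr (by omega)), hM, Matrix.add_mulVec, hc]
    by_cases hij : i ≤ j - 1
    · rw [if_pos hij, if_pos (Finset.mem_range.mpr (by omega))]
      abel
    · rw [if_neg hij, if_neg (by simp only [Finset.mem_range]; omega), Matrix.zero_mulVec]
      abel
  have hf : (fun x : Fin p → ℝ => H (Function.update u i x) ((m : ℤ) + 1 + j))
      = fun x => (LinearMap.toContinuousLinearMap (Matrix.mulVecLin M)) x + c := by
    funext x
    rw [key x]
    simp [Matrix.mulVecLin_apply]
  rw [hf]
  exact (((LinearMap.toContinuousLinearMap (Matrix.mulVecLin M)).hasFDerivAt).add_const c).fderiv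
end

section
/- Let f : ℝ → ℝ with |f(x)| ≤ 1 for all x and |f'| ≤ 1. Let g : ℝ → (0,1) with |g'| ≤ 1/4. Let G(h) = (1 - g(w₃ h)) h + g(w₃ h) f(w₁ h). Then for h ∈ [-2,2] with g(w₃ h) ≥ ε, |G'(h)| ≤ 1 - ε + |w₁| + (3/4)|w₃|. -/
/-- Scalar τ-GRU Jacobian bound: for `G(h) = (1 - g(w₃h)) h + g(w₃h) f(w₁h)`, if
`|f| ≤ 1`, `|f'| ≤ 1`, `g` maps into `(0,1)`, `|g'| ≤ 1/4`, then for `h ∈ [-2,2]` with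
`g(w₃h) ≥ ε` we have `|G'(h)| ≤ 1 - ε + |w₁| + (3/4)|w₃|`. -/
theorem stmt_11 (f g : ℝ → ℝ) (w₁ w₃ ε : ℝ)
    (hfd : Differentiable ℝ f) (hgd : Differentiable ℝ g)
    (hf : ∀ x, |f x| ≤ 1) (hf' : ∀ x, |deriv f x| ≤ 1)
    (hg : ∀ x, g x ∈ Set.Ioo (0 : ℝ) 1) (hg' : ∀ x, |deriv g x| ≤ 1 / 4)
    (G : ℝ → ℝ) (hG : ∀ h, G h = (1 - g (w₃ * h)) * h + g (w₃ * h) * f (w₁ * h)) :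
    ∀ h ∈ Set.Icc (-2 : ℝ) 2, ε ≤ g (w₃ * h) →
      |deriv G h| ≤ 1 - ε + |w₁| + (3 / 4) * |w₃| := by
  intro h hh hε
  have hgc : HasDerivAt (fun x : ℝ => g (w₃ * x)) (deriv g (w₃ * h) * w₃) h := by
    simpa [Function.comp_def] using ((hgd (w₃ * h)).hasDerivAt.comp h
      (((hasDerivAt_id h).const_mul w₃)))
  have hfc : HasDerivAt (fun x : ℝ => f (w₁ * x)) (deriv f (w₁ * h) * w₁) h := by
    simpa [Function.comp_def] using ((hfd (w₁ * h)).hasDerivAt.comp h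
      (((hasDerivAt_id h).const_mul w₁)))
  have hGd : HasDerivAt G
      ((-(deriv g (w₃ * h) * w₃)) * h + (1 - g (w₃ * h)) * 1 +
        ((deriv g (w₃ * h) * w₃) * f (w₁ * h) + g (w₃ * h) * (deriv f (w₁ * h) * w₁))) h := by
    have hGe : G = fun x : ℝ => (1 - g (w₃ * x)) * x + g (w₃ * x) * f (w₁ * x) := funext hG
    rw [hGe]
    have h0 := (((hasDerivAt_const h (1:ℝ)).sub hgc).mul (hasDerivAt_id h)).add (hgc.mul hfc)
    simp only [id_eq] at h0
    convert h0 using 1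
    · rfl
    · rfl
    · rfl
    · simp only [Pi.sub_apply]
      ring
  rw [hGd.deriv]
  have h2 : |h| ≤ 2 := abs_le.mpr ⟨hh.1, hh.2⟩
  have hga := hg (w₃ * h)
  have hg'a := hg' (w₃ * h)
  have hfa := hf (w₁ * h)
  have hf'a := hf' (w₁ * h)
  have e1 : |(-(deriv g (w₃ * h) * w₃)) * h| ≤ (1/4) * |w₃| * 2 := by
    rw [abs_mul, abs_neg, abs_mul]
    calc |deriv g (w₃ * h)| * |w₃| * |h| ≤ 1/4 * |w₃| * 2 := by gcongr
      _ = 1/4 * |w₃| * 2 := by ring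
  have e2 : |(1 - g (w₃ * h)) * 1| ≤ 1 - ε := by
    rw [mul_one, abs_of_nonneg (by linarith [hga.2])]
    linarith
  have e3 : |(deriv g (w₃ * h) * w₃) * f (w₁ * h)| ≤ (1/4) * |w₃| := by
    rw [abs_mul, abs_mul]
    calc |deriv g (w₃ * h)| * |w₃| * |f (w₁ * h)|
        ≤ (1/4) * |w₃| * 1 :=
          mul_le_mul (mul_le_mul hg'a le_rfl (abs_nonneg _) (by norm_num)) hfa
            (abs_nonneg _) (by positivity)
      _ = (1/4) * |w₃| := by ring
  have e4 : |g (w₃ * h) * (deriv f (w₁ * h) * w₁)| ≤ |w₁| := by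
    rw [abs_mul, abs_mul]
    calc |g (w₃ * h)| * (|deriv f (w₁ * h)| * |w₁|)
        ≤ 1 * (1 * |w₁|) := by
          apply mul_le_mul
          · rw [abs_of_pos hga.1]; linarith [hga.2]
          · exact mul_le_mul hf'a le_rfl (abs_nonneg _) (by norm_num)
          · positivity
          · norm_num
      _ = |w₁| := by ring
  calc |(-(deriv g (w₃ * h) * w₃)) * h + (1 - g (w₃ * h)) * 1 +
        ((deriv g (w₃ * h) * w₃) * f (w₁ * h) + g (w₃ * h) * (deriv f (w₁ * h) * w₁))|
      ≤ |(-(deriv g (w₃ * h) * w₃)) * h| + |(1 - g (w₃ * h)) * 1| +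
        (|(deriv g (w₃ * h) * w₃) * f (w₁ * h)| + |g (w₃ * h) * (deriv f (w₁ * h) * w₁)|) := by
        exact (abs_add_le _ _).trans (add_le_add (abs_add_le _ _) (abs_add_le _ _))
    _ ≤ 1 - ε + |w₁| + (3 / 4) * |w₃| := by linarith
end

section
/- Let g : ℝ^d × ℝ^d × ℝ^p → ℝ^d be Lipschitz continuous with constant L (with respect to the sum of norms of the first two arguments), and define x_n by x_n = 0 for n ∈ {-m,...,0} and x_{n+1} = g(x_n, x_{n-m}, u_n), and p_n by p_n = 0 for n ∈ {-m,...,0} and p_{n+1} = N(p_n, p_{n-m}, u_n) where sup over the relevant compact set of ‖g - N‖ ≤ ε*. If all iterates remain in the compact set, then ‖x_n - p_n‖ ≤ ε* · c_n, where c_n satisfies c_n = L(c_{n-1} + c_{n-m-1}) + 1 with c_i = 0 for i ≤ 0. In particular ‖x_n - p_n‖ ≤ ε* · ((2L)^n - 1)/(2L - 1) when L ≠ 1/2. -/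
/-- Error propagation for a delayed dynamical system versus its neural approximation:
if `g` is `L`-Lipschitz in its first two arguments, `‖g - N‖ ≤ ε*` on a set `K`
containing all iterates, then `‖x n - p n‖ ≤ ε* · c n` where
`c n = L (c (n-1) + c (n-m-1)) + 1` with zero initial values; in particular
`‖x n - p n‖ ≤ ε* ((2L)^n - 1)/(2L - 1)` when `L ≠ 1/2`. -/
theorem stmt_13 {d q : ℕ}
    (g N : EuclideanSpace ℝ (Fin d) → EuclideanSpace ℝ (Fin d) → EuclideanSpace ℝ (Fin q) →
      EuclideanSpace ℝ (Fin d))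
    (L : ℝ) (hL : 0 ≤ L)
    (hLip : ∀ a b a' b' v, ‖g a b v - g a' b' v‖ ≤ L * (‖a - a'‖ + ‖b - b'‖))
    (K : Set (EuclideanSpace ℝ (Fin d) × EuclideanSpace ℝ (Fin d) × EuclideanSpace ℝ (Fin q)))
    (hKcompact : IsCompact K)
    (εstar : ℝ) (hε : 0 ≤ εstar)
    (happrox : ∀ s ∈ K, ‖g s.1 s.2.1 s.2.2 - N s.1 s.2.1 s.2.2‖ ≤ εstar)
    (m : ℕ) (hm : 0 < m)
    (u : ℕ → EuclideanSpace ℝ (Fin q))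
    (x p : ℤ → EuclideanSpace ℝ (Fin d))
    (hx0 : ∀ n : ℤ, -(m : ℤ) ≤ n → n ≤ 0 → x n = 0)
    (hp0 : ∀ n : ℤ, -(m : ℤ) ≤ n → n ≤ 0 → p n = 0)
    (hxrec : ∀ n : ℕ, x ((n : ℤ) + 1) = g (x n) (x ((n : ℤ) - m)) (u n))
    (hprec : ∀ n : ℕ, p ((n : ℤ) + 1) = N (p n) (p ((n : ℤ) - m)) (u n))
    (hxK : ∀ n : ℕ, (x n, x ((n : ℤ) - m), u n) ∈ K)
    (hpK : ∀ n : ℕ, (p n, p ((n : ℤ) - m), u n) ∈ K)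
    (c : ℤ → ℝ)
    (hc0 : ∀ i : ℤ, i ≤ 0 → c i = 0)
    (hcrec : ∀ n : ℤ, 1 ≤ n → c n = L * (c (n - 1) + c (n - m - 1)) + 1) :
    (∀ n : ℕ, ‖x n - p n‖ ≤ εstar * c n) ∧
    (L ≠ 1 / 2 → ∀ n : ℕ, ‖x n - p n‖ ≤ εstar * (((2 * L) ^ n - 1) / (2 * L - 1))) := by

  have key : ∀ k : ℕ, ‖x ((k:ℤ) - m) - p ((k:ℤ) - m)‖ ≤ εstar * c ((k:ℤ) - m) := by
    intro k
    induction k using Nat.strong_induction_on with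
    | _ k ih =>
      rcases le_or_gt k m with hk | hk
      · have h1 : -(m:ℤ) ≤ (k:ℤ) - m := by omega
        have h2 : (k:ℤ) - m ≤ 0 := by omega
        rw [hx0 _ h1 h2, hp0 _ h1 h2, hc0 _ h2]
        simp
      · obtain ⟨n, rfl⟩ : ∃ n, k = n + m + 1 := ⟨k - m - 1, by omega⟩
        have hidx : ((n + m + 1 : ℕ) : ℤ) - m = (n:ℤ) + 1 := by push_cast; ring
        rw [hidx, hxrec n, hprec n]
        have ih1 : ‖x n - p n‖ ≤ εstar * c n := by
          have := ih (n + m) (by omega)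
          have e : ((n + m : ℕ) : ℤ) - m = (n:ℤ) := by push_cast; ring
          rwa [e] at this
        have ih2 : ‖x ((n:ℤ) - m) - p ((n:ℤ) - m)‖ ≤ εstar * c ((n:ℤ) - m) :=
          ih n (by omega)
        have hcv := hcrec ((n:ℤ) + 1) (by omega)
        have e1 : (n:ℤ) + 1 - 1 = (n:ℤ) := by ring
        have e2 : (n:ℤ) + 1 - m - 1 = (n:ℤ) - m := by ring
        rw [e1, e2] at hcv
        calc ‖g (x n) (x ((n:ℤ) - m)) (u n) - N (p n) (p ((n:ℤ) - m)) (u n)‖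
            ≤ ‖g (x n) (x ((n:ℤ) - m)) (u n) - g (p n) (p ((n:ℤ) - m)) (u n)‖
              + ‖g (p n) (p ((n:ℤ) - m)) (u n) - N (p n) (p ((n:ℤ) - m)) (u n)‖ :=
              norm_sub_le_norm_sub_add_norm_sub _ _ _
          _ ≤ L * (‖x n - p n‖ + ‖x ((n:ℤ) - m) - p ((n:ℤ) - m)‖) + εstar :=
              add_le_add (hLip _ _ _ _ _)
                (happrox (p n, p ((n:ℤ) - m), u n) (hpK n))
          _ ≤ L * (εstar * c n + εstar * c ((n:ℤ) - m)) + εstar :=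
              add_le_add (mul_le_mul_of_nonneg_left (add_le_add ih1 ih2) hL) le_rfl
          _ = εstar * c ((n:ℤ) + 1) := by rw [hcv]; ring
  have main : ∀ n : ℕ, ‖x n - p n‖ ≤ εstar * c n := by
    intro n
    have := key (n + m)
    have e : ((n + m : ℕ) : ℤ) - m = (n:ℤ) := by push_cast; ring
    rwa [e] at this
  refine ⟨main, fun hLhalf n => ?_⟩
  have hcsum : ∀ n : ℕ, c n ≤ ∑ i ∈ Finset.range n, (2 * L) ^ i := by
    intro n
    induction n using Nat.strong_induction_on with
    | _ n ih =>
      have hsnn : ∀ k : ℕ, (0:ℝ) ≤ ∑ i ∈ Finset.range k, (2 * L) ^ i :=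
        fun k => Finset.sum_nonneg fun i _ => pow_nonneg (by linarith) i
      match n with
      | 0 => simpa using le_of_eq (hc0 0 le_rfl)
      | Nat.succ n =>
        have hcv := hcrec ((n:ℤ) + 1) (by omega)
        have e1 : (n:ℤ) + 1 - 1 = (n:ℤ) := by ring
        have e2 : (n:ℤ) + 1 - m - 1 = (n:ℤ) - m := by ring
        rw [e1, e2] at hcv
        have h1 : c n ≤ ∑ i ∈ Finset.range n, (2 * L) ^ i := ih n (by omega)
        have h2 : c ((n:ℤ) - m) ≤ ∑ i ∈ Finset.range n, (2 * L) ^ i := by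
          rcases lt_or_ge n m with h | h
          · rw [hc0 _ (by omega)]; exact hsnn n
          · obtain ⟨j, rfl⟩ : ∃ j, n = j + m := ⟨n - m, by omega⟩
            have e : ((j + m : ℕ) : ℤ) - m = (j:ℤ) := by push_cast; ring
            rw [e]
            refine (ih j (by omega)).trans ?_
            exact Finset.sum_le_sum_of_subset_of_nonneg
              (Finset.range_subset_range.2 (by omega))
              (fun i _ _ => pow_nonneg (by linarith) i)
        have hgeo : ∑ i ∈ Finset.range (n + 1), (2 * L) ^ i
            = (2 * L) * ∑ i ∈ Finset.range n, (2 * L) ^ i + 1 := geom_sum_succ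
        have e3 : ((n + 1 : ℕ) : ℤ) = (n:ℤ) + 1 := by push_cast; ring
        rw [e3, hcv, hgeo]
        nlinarith
  have h2L : (2 * L : ℝ) ≠ 1 := by
    intro h; apply hLhalf; linarith
  have := geom_sum_eq h2L n
  calc ‖x n - p n‖ ≤ εstar * c n := main n
    _ ≤ εstar * (((2 * L) ^ n - 1) / (2 * L - 1)) := by
        rw [← this]
        exact mul_le_mul_of_nonneg_left (hcsum n) hε
end
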